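/- Triality of duals: Let 0 → U⊗V →i Π →j K → 0 be exact (finite-dimensional real vector spaces, U, V, K nonzero). Let Δ = Π*_U with sequence 0 → U⊗K* →e Δ →p V* → 0, and let Ξ = Δ*_{K*} with sequence 0 → V⊗K* →r Ξ →q U* → 0 (the K*-dual of Δ, using the identification K** ≅ K). Define the transposed inclusion iᵗ : V⊗U → Π by iᵗ(v⊗u) = −i(u⊗v). Then there exists a V-valued bilinear pairing ⟨·,·⟩_V : Ξ × Π → V satisfying: ⟨η, iᵗ(θ)⟩_V = (contraction of θ ∈ V⊗U with q(η) ∈ U*) for all η ∈ Ξ, θ ∈ V⊗U, and ⟨r(ζ), σ⟩_V = (contraction of ζ ∈ V⊗K* with j(σ) ∈ K) for all ζ ∈ V⊗K*, σ ∈ Π. -/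
import Mathlib


open Function Module

/-- The contraction `id_U ⊗ v* : U ⊗ V → U`, `u ⊗ v ↦ v*(v) • u`. -/
noncomputable def contractR (U V : Type*) [AddCommGroup U] [Module ℝ U]
    [AddCommGroup V] [Module ℝ V] (f : V →ₗ[ℝ] ℝ) :
    TensorProduct ℝ U V →ₗ[ℝ] U :=
  (TensorProduct.rid ℝ U).toLinearMap ∘ₗ LinearMap.lTensor U f

set_option maxHeartbeats 1000000 in
theorem stmt14 (U V K W : Type*)
    [AddCommGroup U] [Module ℝ U] [FiniteDimensional ℝ U] [Nontrivial U]
    [AddCommGroup V] [Module ℝ V] [FiniteDimensional ℝ V] [Nontrivial V]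
    [AddCommGroup K] [Module ℝ K] [FiniteDimensional ℝ K] [Nontrivial K]
    [AddCommGroup W] [Module ℝ W] [FiniteDimensional ℝ W]
    -- the original sequence 0 → U⊗V →i Π →j K → 0
    (i : TensorProduct ℝ U V →ₗ[ℝ] W) (j : W →ₗ[ℝ] K)
    (hi : Injective i) (hj : Surjective j)
    (hij : LinearMap.range i = LinearMap.ker j)
    -- Δ = Π*_U with its sequence 0 → U⊗K* →e Δ →p V* → 0
    (Δ : Submodule ℝ (W →ₗ[ℝ] U))
    (hΔ : (Δ : Set (W →ₗ[ℝ] U)) =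
      {ε | ∃ vs : V →ₗ[ℝ] ℝ, ε ∘ₗ i = contractR U V vs})
    (pm : Δ →ₗ[ℝ] (V →ₗ[ℝ] ℝ))
    (hpm : ∀ ε : Δ, (ε : W →ₗ[ℝ] U) ∘ₗ i = contractR U V (pm ε))
    (hpsurj : Surjective pm)
    (em : TensorProduct ℝ U (K →ₗ[ℝ] ℝ) →ₗ[ℝ] Δ)
    (hem : ∀ (u : U) (κ : K →ₗ[ℝ] ℝ) (σ : W),
      ((em (u ⊗ₜ[ℝ] κ)) : W →ₗ[ℝ] U) σ = κ (j σ) • u)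
    (heminj : Injective em)
    (hexact2 : LinearMap.range em = LinearMap.ker pm)
    -- Ξ = Δ*_{K*} with its sequence 0 → V⊗K* →r Ξ →q U* → 0
    (Ξ : Submodule ℝ (Δ →ₗ[ℝ] (K →ₗ[ℝ] ℝ)))
    (hΞ : (Ξ : Set (Δ →ₗ[ℝ] (K →ₗ[ℝ] ℝ))) =
      {η | ∃ us : U →ₗ[ℝ] ℝ, ∀ (u : U) (κ : K →ₗ[ℝ] ℝ),
        η (em (u ⊗ₜ[ℝ] κ)) = us u • κ})
    (qm : Ξ →ₗ[ℝ] (U →ₗ[ℝ] ℝ))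
    (hqm : ∀ (η : Ξ) (u : U) (κ : K →ₗ[ℝ] ℝ),
      (η : Δ →ₗ[ℝ] (K →ₗ[ℝ] ℝ)) (em (u ⊗ₜ[ℝ] κ)) = qm η u • κ)
    (hqsurj : Surjective qm)
    (rm : TensorProduct ℝ V (K →ₗ[ℝ] ℝ) →ₗ[ℝ] Ξ)
    (hrm : ∀ (v : V) (κ : K →ₗ[ℝ] ℝ) (ε : Δ),
      ((rm (v ⊗ₜ[ℝ] κ)) : Δ →ₗ[ℝ] (K →ₗ[ℝ] ℝ)) ε = pm ε v • κ)
    (hrinj : Injective rm)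
    (hexact3 : LinearMap.range rm = LinearMap.ker qm) :
    -- the V-valued pairing between Ξ and Π
    ∃ PV : Ξ →ₗ[ℝ] W →ₗ[ℝ] V,
      (∀ (η : Ξ) (v : V) (u : U), PV η (-(i (u ⊗ₜ[ℝ] v))) = qm η u • v) ∧
      (∀ (v : V) (κ : K →ₗ[ℝ] ℝ) (σ : W),
        PV (rm (v ⊗ₜ[ℝ] κ)) σ = κ (j σ) • v) := by

  obtain ⟨s, hs⟩ := pm.exists_rightInverse_of_surjective (LinearMap.range_eq_top.2 hpsurj)
  set e := Module.evalEquiv ℝ V with he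
  set F : Ξ → (W →ₗ[ℝ] V) := fun η =>
    e.symm.toLinearMap ∘ₗ
      (((((Ξ.subtype η) ∘ₗ s).flip) ∘ₗ j) -
        ((LinearMap.llcomp ℝ (Module.Dual ℝ V) U ℝ (qm η)) ∘ₗ (Δ.subtype ∘ₗ s).flip)) with hF
  have hFapp : ∀ (η : Ξ) (σ : W) (vs : Module.Dual ℝ V),
      e (F η σ) vs = (η : Δ →ₗ[ℝ] (K →ₗ[ℝ] ℝ)) (s vs) (j σ) - qm η ((s vs : W →ₗ[ℝ] U) σ) := by
    intro η σ vs
    simp [hF]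
  have hpms : ∀ vs : Module.Dual ℝ V, pm (s vs) = vs := by
    intro vs
    exact congrFun (congrArg DFunLike.coe hs) vs
  refine ⟨{ toFun := F, map_add' := ?_, map_smul' := ?_ }, ?_, ?_⟩
  · intro η₁ η₂
    refine LinearMap.ext fun σ => e.injective (LinearMap.ext fun vs => ?_)
    simp only [LinearMap.add_apply, map_add]
    rw [hFapp, hFapp, hFapp]
    simp only [Submodule.coe_add, LinearMap.add_apply, map_add]
    ring
  · intro c η
    refine LinearMap.ext fun σ => e.injective (LinearMap.ext fun vs => ?_)
    simp only [RingHom.id_apply, LinearMap.smul_apply, map_smul, smul_eq_mul]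
    rw [hFapp, hFapp]
    simp only [Submodule.coe_smul, LinearMap.smul_apply, map_smul, smul_eq_mul]
    ring
  · intro η v u
    show F η _ = _
    refine e.injective (LinearMap.ext fun vs => ?_)
    rw [hFapp]
    have h1 : j (i (u ⊗ₜ[ℝ] v)) = 0 := by
      have : i (u ⊗ₜ[ℝ] v) ∈ LinearMap.ker j := hij ▸ LinearMap.mem_range_self i _
      exact this
    have h2 : (s vs : W →ₗ[ℝ] U) (i (u ⊗ₜ[ℝ] v)) = vs v • u := by
      have := congrFun (congrArg DFunLike.coe (hpm (s vs))) (u ⊗ₜ[ℝ] v)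
      rw [LinearMap.comp_apply] at this
      rw [this, hpms]
      simp [contractR]
    simp only [map_neg, h1, h2, map_smul]
    simp [he, Module.evalEquiv_apply, mul_comm]
  · intro v κ σ
    show F _ _ = _
    refine e.injective (LinearMap.ext fun vs => ?_)
    rw [hFapp]
    have h1 : qm (rm (v ⊗ₜ[ℝ] κ)) = 0 := by
      have : rm (v ⊗ₜ[ℝ] κ) ∈ LinearMap.ker qm := hexact3 ▸ LinearMap.mem_range_self rm _
      exact this
    rw [hrm, h1, hpms]
    simp [he, Module.evalEquiv_apply, mul_comm]
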